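/- Let D be a Ryser design on v points. Then the following conditions are equivalent: (a) the equivalence class of D under ∼ contains a symmetric design; (b) D is of Type-1; (c) every Ryser design in the equivalence class of D is of Type-1. -/
import Mathlib


open scoped symmDiff

/-- Block complementation of a family of blocks with respect to a block `A`:
the new family is `{A} ∪ {A ∆ B : B ∈ L, B ≠ A}`. -/
def blockComp {α : Type*} [DecidableEq α] (A : Finset α) (L : Finset (Finset α)) :
    Finset (Finset α) :=
  insert A ((L.erase A).image (fun B => A ∆ B))

/-- The replication number of a point `x`: the number of blocks of `L` containing `x`. -/
def repl {α : Type*} [DecidableEq α] (L : Finset (Finset α)) (x : α) : ℕ :=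
  (L.filter (fun B => x ∈ B)).card

/-- A Ryser design on point set `X` with block family `L` and index `lam`. -/
def IsRyserDesign {α : Type*} [DecidableEq α] (X : Finset α) (L : Finset (Finset α))
    (lam : ℕ) : Prop :=
  1 ≤ lam ∧ L.card = X.card ∧ (∀ B ∈ L, B ⊆ X) ∧
    (∀ B₁ ∈ L, ∀ B₂ ∈ L, B₁ ≠ B₂ → (B₁ ∩ B₂).card = lam) ∧
    (∀ B ∈ L, lam < B.card) ∧
    (∃ B₁ ∈ L, ∃ B₂ ∈ L, B₁.card ≠ B₂.card)

/-- A symmetric design on point set `X` with block family `L`, block size `k` and index `lam`. -/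
def IsSymmetricDesign {α : Type*} [DecidableEq α] (X : Finset α) (L : Finset (Finset α))
    (k lam : ℕ) : Prop :=
  1 ≤ lam ∧ L.card = X.card ∧ (∀ B ∈ L, B ⊆ X) ∧
    (∀ B₁ ∈ L, ∀ B₂ ∈ L, B₁ ≠ B₂ → (B₁ ∩ B₂).card = lam) ∧
    (∀ B ∈ L, B.card = k) ∧ lam < k

/-- `DesignSim M L` : the family `M` is obtained from `L` by the identity or by a single
block complementation with respect to a member of `L` (the relation `∼`). -/
def DesignSim {α : Type*} [DecidableEq α] (M L : Finset (Finset α)) : Prop :=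
  M = L ∨ ∃ A ∈ L, M = blockComp A L

/-- A Ryser design is of Type-1 if it is obtained from a symmetric design by block
complementation with respect to one of its blocks. -/
def IsType1 {α : Type*} [DecidableEq α] (X : Finset α) (L : Finset (Finset α)) : Prop :=
  ∃ (M : Finset (Finset α)) (k lam : ℕ), IsSymmetricDesign X M k lam ∧
    ∃ A ∈ M, L = blockComp A M
section Aux
variable {α : Type*} [DecidableEq α]

lemma mem_blockComp {A C : Finset α} {L : Finset (Finset α)} :
    C ∈ blockComp A L ↔ C = A ∨ ∃ B ∈ L, B ≠ A ∧ C = A ∆ B := by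
  simp only [blockComp, Finset.mem_insert, Finset.mem_image, Finset.mem_erase]
  constructor
  · rintro (h | ⟨B, ⟨hBA, hBL⟩, rfl⟩)
    · exact Or.inl h
    · exact Or.inr ⟨B, hBL, hBA, rfl⟩
  · rintro (h | ⟨B, hBL, hBA, rfl⟩)
    · exact Or.inl h
    · exact Or.inr ⟨B, ⟨hBA, hBL⟩, rfl⟩

lemma symmDiff_pair (A B C : Finset α) : (A ∆ B) ∆ (A ∆ C) = B ∆ C := by
  ext x; simp [Finset.mem_symmDiff]; tauto

lemma blockComp_invol {A : Finset α} {L : Finset (Finset α)}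
    (hA : A ∈ L) (h0 : ∅ ∉ L) : blockComp A (blockComp A L) = L := by
  ext C
  rw [mem_blockComp]
  constructor
  · rintro (rfl | ⟨B, hB, hBA, rfl⟩)
    · exact hA
    · rcases mem_blockComp.1 hB with rfl | ⟨B', hB', _, rfl⟩
      · exact absurd rfl hBA
      · rwa [symmDiff_symmDiff_cancel_left]
  · intro hC
    by_cases h : C = A
    · exact Or.inl h
    · refine Or.inr ⟨A ∆ C, mem_blockComp.2 (Or.inr ⟨C, hC, h, rfl⟩), ?_,
        (symmDiff_symmDiff_cancel_left A C).symm⟩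
      intro he
      rw [symmDiff_eq_left] at he
      exact h0 (by simpa [he] using hC)

lemma blockComp_triangle {A₀ B : Finset α} {N : Finset (Finset α)}
    (hA₀ : A₀ ∈ N) (hB : B ∈ N) (hne : B ≠ A₀) (h0 : ∅ ∉ N) :
    blockComp (A₀ ∆ B) (blockComp A₀ N) = blockComp B N := by
  have hBne : B ≠ ∅ := fun h => h0 (h ▸ hB)
  have hAne : A₀ ∆ B ≠ A₀ := fun h => hBne (by simpa using symmDiff_eq_left.1 h)
  ext C
  rw [mem_blockComp, mem_blockComp]
  constructor
  · rintro (rfl | ⟨D, hD, hDA, rfl⟩)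
    · exact Or.inr ⟨A₀, hA₀, fun h => hne h.symm, symmDiff_comm A₀ B⟩
    · rcases mem_blockComp.1 hD with rfl | ⟨B', hB', hB'A, rfl⟩
      · left
        rw [symmDiff_comm, symmDiff_symmDiff_cancel_left]
      · refine Or.inr ⟨B', hB', fun h => hDA (h ▸ rfl), ?_⟩
        rw [symmDiff_pair]
  · rintro (rfl | ⟨B', hB', hB'B, rfl⟩)
    · refine Or.inr ⟨A₀, mem_blockComp.2 (Or.inl rfl), fun h => hAne h.symm, ?_⟩
      rw [symmDiff_comm, symmDiff_symmDiff_cancel_left]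
    · by_cases h : B' = A₀
      · left; rw [h, symmDiff_comm]
      · refine Or.inr ⟨A₀ ∆ B', mem_blockComp.2 (Or.inr ⟨B', hB', h, rfl⟩), ?_, ?_⟩
        · intro he
          apply hB'B
          have := congrArg (fun t => A₀ ∆ t) he
          simpa [symmDiff_symmDiff_cancel_left] using this
        · rw [symmDiff_pair]

lemma emp_not_mem_ryser {X : Finset α} {L : Finset (Finset α)} {lam : ℕ}
    (h : IsRyserDesign X L lam) : ∅ ∉ L := by
  intro hm
  have := h.2.2.2.2.1 ∅ hm
  simp at this

lemma emp_not_mem_symm {X : Finset α} {L : Finset (Finset α)} {k lam : ℕ}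
    (h : IsSymmetricDesign X L k lam) : ∅ ∉ L := by
  intro hm
  have h1 := h.2.2.2.2.1 ∅ hm
  have h2 := h.2.2.2.2.2
  have h3 := h.1
  simp at h1
  omega

end Aux

/-- For a Ryser design `D`, the following are equivalent: (a) the equivalence class of
`D` contains a symmetric design; (b) `D` is of Type-1; (c) every Ryser design in the
equivalence class of `D` is of Type-1. -/
theorem type1_tfae {α : Type*} [DecidableEq α] (X : Finset α)
    (L : Finset (Finset α)) (lam : ℕ) (hD : IsRyserDesign X L lam) :
    ((∃ M, DesignSim M L ∧ ∃ k lam', IsSymmetricDesign X M k lam') ↔ IsType1 X L) ∧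
    ((∃ M, DesignSim M L ∧ ∃ k lam', IsSymmetricDesign X M k lam') ↔
      (∀ M lam', DesignSim M L → IsRyserDesign X M lam' → IsType1 X M)) := by
  -- (b) → (a)
  have hba : IsType1 X L → (∃ M, DesignSim M L ∧ ∃ k lam', IsSymmetricDesign X M k lam') := by
    rintro ⟨M, k, lam', hsym, A, hAM, rfl⟩
    refine ⟨M, Or.inr ⟨A, mem_blockComp.2 (Or.inl rfl),
      (blockComp_invol hAM (emp_not_mem_symm hsym)).symm⟩, k, lam', hsym⟩
  -- (a) → (b)
  have hab : (∃ M, DesignSim M L ∧ ∃ k lam', IsSymmetricDesign X M k lam') → IsType1 X L := by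
    rintro ⟨M, hsim, k, lam', hsym⟩
    rcases hsim with rfl | ⟨A, hAL, rfl⟩
    · obtain ⟨B₁, hB₁, B₂, hB₂, hne⟩ := hD.2.2.2.2.2
      have e1 := hsym.2.2.2.2.1 B₁ hB₁
      have e2 := hsym.2.2.2.2.1 B₂ hB₂
      exact absurd (e1.trans e2.symm) hne
    · exact ⟨blockComp A L, k, lam', hsym, A, mem_blockComp.2 (Or.inl rfl),
        (blockComp_invol hAL (emp_not_mem_ryser hD)).symm⟩
  refine ⟨⟨hab, hba⟩, ⟨?_, ?_⟩⟩
  · -- (a) → (c)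
    intro ha M lam' hsim hM
    obtain ⟨N, k, lam₀, hsymN, A₀, hA₀, rfl⟩ := hab ha
    have h0N : ∅ ∉ N := emp_not_mem_symm hsymN
    rcases hsim with rfl | ⟨A, hAL, rfl⟩
    · exact ⟨N, k, lam₀, hsymN, A₀, hA₀, rfl⟩
    · rcases mem_blockComp.1 hAL with rfl | ⟨B, hBN, hBA₀, rfl⟩
      · -- complementing back gives the symmetric design: contradicts M being Ryser
        rw [blockComp_invol hA₀ h0N] at hM
        obtain ⟨B₁, hB₁, B₂, hB₂, hne⟩ := hM.2.2.2.2.2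
        have e1 := hsymN.2.2.2.2.1 B₁ hB₁
        have e2 := hsymN.2.2.2.2.1 B₂ hB₂
        exact absurd (e1.trans e2.symm) hne
      · rw [blockComp_triangle hA₀ hBN hBA₀ h0N]
        exact ⟨N, k, lam₀, hsymN, B, hBN, rfl⟩
  · -- (c) → (a)
    intro hc
    exact hba (hc L lam (Or.inl rfl) hD)
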